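/- Let (H,K,A,C) be a Yetter-Drinfeld datum, M ∈ _A YD^C(H,K), and U, V left H-modules. Then (id_M ⊗ ψ_{U,V}) ∘ β_{U⊗V, M} = (β_{U,M} ⊗ id_{C⊗_H V}) ∘ (id_U ⊗ β_{V,M}), where β_{V,M}(v ⊗ m) = m_{[0]} ⊗ m_{[1]} ⊗_H v and ψ_{U,V}(c ⊗_H (u ⊗ v)) = (c_{(1)} ⊗_H u) ⊗ (c_{(2)} ⊗_H v). -/

import Mathlib

/-
Already before passing to `C ⊗_H -`, both sides send `(u ⊗ v) ⊗ m` to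
`m₍₀₎ ⊗ ((m₍₁₎ ⊗ u) ⊗ (m₍₂₎ ⊗ v))`: the left side reads `m₍₀₎ ⊗ m₍₁₎ ⊗ m₍₂₎` off
`(id ⊗ Δ) ρ(m)`, the right side off `(ρ ⊗ id) ρ(m)`, and coassociativity of `ρ` identifies
the two.
-/

open TensorProduct Coalgebra

variable {k : Type} [CommRing k]

/-- The `H`-balancing submodule of `C ⊗ₖ U`, whose quotient is `C ⊗_H U`. -/
def balancer (H : Type) [Ring H] [Algebra k H]
    (C : Type) [AddCommGroup C] [Module k C] (actR : C ⊗[k] H →ₗ[k] C)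
    (U : Type) [AddCommGroup U] [Module k U] [Module H U] [IsScalarTower k H U] :
    Submodule k (C ⊗[k] U) :=
  Submodule.span k {x | ∃ (c : C) (h : H) (u : U), x = actR (c ⊗ₜ h) ⊗ₜ u - c ⊗ₜ (h • u)}

/-- The half-braid `β_{V,M} : V ⊗ M → M ⊗ (C ⊗ V)` at the level of `k`-modules,
`v ⊗ m ↦ m₍₀₎ ⊗ (m₍₁₎ ⊗ v)`. -/
noncomputable def betaRaw {C M : Type} [AddCommGroup C] [Module k C] [AddCommGroup M] [Module k M]
    (ρ : M →ₗ[k] M ⊗[k] C)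
    (V : Type) [AddCommGroup V] [Module k V] :
    V ⊗[k] M →ₗ[k] M ⊗[k] (C ⊗[k] V) :=
  (TensorProduct.assoc k M C V).toLinearMap ∘ₗ (LinearMap.rTensor V ρ) ∘ₗ
    (TensorProduct.comm k V M).toLinearMap

section
variable {C M U V : Type} [AddCommGroup C] [Module k C] [AddCommGroup M] [Module k M]
  [AddCommGroup U] [Module k U] [AddCommGroup V] [Module k V]

@[simp]
theorem betaRaw_tmul (ρ : M →ₗ[k] M ⊗[k] C) (v : V) (m : M) :
    betaRaw ρ V (v ⊗ₜ m) = TensorProduct.assoc k M C V (ρ m ⊗ₜ v) := rfl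

theorem tensorTensorTensorComm_tmul_tmul {D : Type} [AddCommGroup D] [Module k D]
    (s : C ⊗[k] D) (u : U) (v : V) :
    tensorTensorTensorComm k C D U V (s ⊗ₜ (u ⊗ₜ v)) =
      map ((mk k C U).flip u) ((mk k D V).flip v) s := by
  induction s using TensorProduct.induction_on with
  | zero => simp
  | tmul c d => simp
  | add x y hx hy => simp [add_tmul, hx, hy]

theorem assoc_assoc_tmul_tmul {D : Type} [AddCommGroup D] [Module k D]
    (s : M ⊗[k] C) (u : U) (d : D) (v : V) :
    TensorProduct.assoc k M (C ⊗[k] U) (D ⊗[k] V)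
        (TensorProduct.assoc k M C U (s ⊗ₜ u) ⊗ₜ (d ⊗ₜ v)) =
      LinearMap.lTensor M (map ((mk k C U).flip u) ((mk k D V).flip v))
        (TensorProduct.assoc k M C D (s ⊗ₜ d)) := by
  induction s using TensorProduct.induction_on with
  | zero => simp
  | tmul m c => simp
  | add x y hx hy => simp [add_tmul, hx, hy]

theorem betaRaw_tensor_comul_tmul [CoalgebraStruct k C] (ρ : M →ₗ[k] M ⊗[k] C)
    (u : U) (v : V) (m : M) :
    LinearMap.lTensor M ((tensorTensorTensorComm k C C U V).toLinearMap ∘ₗ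
        LinearMap.rTensor (U ⊗[k] V) (comul (R := k) (A := C)))
        (betaRaw ρ (U ⊗[k] V) ((u ⊗ₜ v) ⊗ₜ m)) =
      LinearMap.lTensor M (map ((mk k C U).flip u) ((mk k C V).flip v))
        (LinearMap.lTensor M comul (ρ m)) := by
  rw [betaRaw_tmul]
  induction ρ m using TensorProduct.induction_on with
  | zero => simp
  | tmul m c => simp [tensorTensorTensorComm_tmul_tmul]
  | add x y hx hy => simp only [add_tmul, map_add, hx, hy]

theorem betaRaw_comp_betaRaw_tmul (ρ : M →ₗ[k] M ⊗[k] C) (u : U) (v : V) (m : M) :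
    TensorProduct.assoc k M (C ⊗[k] U) (C ⊗[k] V)
        (LinearMap.rTensor (C ⊗[k] V) (betaRaw ρ U)
          ((TensorProduct.assoc k U M (C ⊗[k] V)).symm (u ⊗ₜ betaRaw ρ V (v ⊗ₜ m)))) =
      LinearMap.lTensor M (map ((mk k C U).flip u) ((mk k C V).flip v))
        (TensorProduct.assoc k M C C (LinearMap.rTensor C ρ (ρ m))) := by
  rw [betaRaw_tmul]
  induction ρ m using TensorProduct.induction_on with
  | zero => simp
  | tmul m c => simp [assoc_assoc_tmul_tmul]
  | add x y hx hy => simp only [add_tmul, tmul_add, map_add, hx, hy]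

theorem betaRaw_heptagon [CoalgebraStruct k C] (ρ : M →ₗ[k] M ⊗[k] C)
    (hρ : (TensorProduct.assoc k M C C).toLinearMap ∘ₗ (LinearMap.rTensor C ρ) ∘ₗ ρ =
      (LinearMap.lTensor M (comul (R := k) (A := C))) ∘ₗ ρ) :
    LinearMap.lTensor M ((tensorTensorTensorComm k C C U V).toLinearMap ∘ₗ
        LinearMap.rTensor (U ⊗[k] V) (comul (R := k) (A := C))) ∘ₗ betaRaw ρ (U ⊗[k] V) =
      (TensorProduct.assoc k M (C ⊗[k] U) (C ⊗[k] V)).toLinearMap ∘ₗ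
      (LinearMap.rTensor (C ⊗[k] V) (betaRaw ρ U)) ∘ₗ
      (TensorProduct.assoc k U M (C ⊗[k] V)).symm.toLinearMap ∘ₗ
      (LinearMap.lTensor U (betaRaw ρ V)) ∘ₗ
      (TensorProduct.assoc k U V M).toLinearMap := by
  ext u v m
  simp only [AlgebraTensorModule.curry_apply, curry_apply, LinearMap.coe_restrictScalars,
    LinearMap.comp_apply, LinearEquiv.coe_coe, TensorProduct.assoc_tmul, LinearMap.lTensor_tmul]
  rw [betaRaw_tensor_comul_tmul, betaRaw_comp_betaRaw_tmul]
  exact congrArg _ (LinearMap.congr_fun hρ m).symm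
end

/-- Heptagon condition for the half-braid of a generalized Yetter-Drinfeld module:
`(id_M ⊗ ψ_{U,V}) ∘ β_{U⊗V,M} = (β_{U,M} ⊗ id_{C⊗_H V}) ∘ (id_U ⊗ β_{V,M})`,
as maps `(U ⊗ V) ⊗ M → M ⊗ ((C ⊗_H U) ⊗ (C ⊗_H V))`, where `C ⊗_H W` is realized as
the quotient of `C ⊗ₖ W` by the `H`-balancing submodule and
`ψ_{U,V}(c ⊗_H (u ⊗ v)) = (c₍₁₎ ⊗_H u) ⊗ (c₍₂₎ ⊗_H v)`. -/
theorem genYD_heptagon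
    {H : Type} [Ring H] [Bialgebra k H]
    {A : Type}
    {C : Type} [AddCommGroup C] [Module k C] [Coalgebra k C]
    {M : Type} [AddCommGroup M] [Module k M]
    (actR : C ⊗[k] H →ₗ[k] C)
    (ρ : M →ₗ[k] M ⊗[k] C)
    -- `M` is a right `C`-comodule (coassociative and counital coaction)
    (hρcoassoc : (TensorProduct.assoc k M C C).toLinearMap ∘ₗ
        (LinearMap.rTensor C ρ) ∘ₗ ρ = (LinearMap.lTensor M (comul (R := k) (A := C))) ∘ₗ ρ)
    -- two left `H`-modules
    (U : Type) [AddCommGroup U] [Module k U] [Module H U] [IsScalarTower k H U]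
    (V : Type) [AddCommGroup V] [Module k V] [Module H V] [IsScalarTower k H V] :
    (LinearMap.lTensor M
        ((TensorProduct.map (balancer H C actR U).mkQ (balancer H C actR V).mkQ) ∘ₗ
          (TensorProduct.tensorTensorTensorComm k C C U V).toLinearMap ∘ₗ
          (LinearMap.rTensor (U ⊗[k] V) (comul (R := k) (A := C))))) ∘ₗ
      betaRaw ρ (U ⊗[k] V)
    = (LinearMap.lTensor M
          (TensorProduct.map (balancer H C actR U).mkQ (balancer H C actR V).mkQ)) ∘ₗ
      (TensorProduct.assoc k M (C ⊗[k] U) (C ⊗[k] V)).toLinearMap ∘ₗ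
      (LinearMap.rTensor (C ⊗[k] V) (betaRaw ρ U)) ∘ₗ
      (TensorProduct.assoc k U M (C ⊗[k] V)).symm.toLinearMap ∘ₗ
      (LinearMap.lTensor U (betaRaw ρ V)) ∘ₗ
      (TensorProduct.assoc k U V M).toLinearMap := by
  rw [LinearMap.lTensor_comp, LinearMap.comp_assoc, betaRaw_heptagon ρ hρcoassoc]
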